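/- arXiv:math/0412156 — 2 statements merged into one kernel-verified Lean document; each statement's English description precedes it below -/
import Mathlib

section
/- Up to conjugacy, the nontrivial finite subgroups of G = Hei ⋊ ℤ/4 are exactly ⟨t⟩ ≅ ℤ/4, ⟨t²⟩ ≅ ℤ/2, and ⟨ut²⟩ ≅ ℤ/2. -/
/-- The discrete 3-dimensional Heisenberg group: integer triples `(x,y,z)` corresponding to
the upper triangular matrix with `x` in position (1,2), `y` in position (1,3) and `z` in
position (2,3). -/
@[ext] structure Hei where
  x : ℤ
  y : ℤ
  z : ℤ

namespace Hei

instance : Mul Hei := ⟨fun a b => ⟨a.x + b.x, a.y + b.y + a.x * b.z, a.z + b.z⟩⟩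
instance : One Hei := ⟨⟨0, 0, 0⟩⟩
instance : Inv Hei := ⟨fun a => ⟨-a.x, -a.y + a.x * a.z, -a.z⟩⟩

@[simp] lemma mul_x (a b : Hei) : (a * b).x = a.x + b.x := rfl
@[simp] lemma mul_y (a b : Hei) : (a * b).y = a.y + b.y + a.x * b.z := rfl
@[simp] lemma mul_z (a b : Hei) : (a * b).z = a.z + b.z := rfl
@[simp] lemma one_x : (1 : Hei).x = 0 := rfl
@[simp] lemma one_y : (1 : Hei).y = 0 := rfl
@[simp] lemma one_z : (1 : Hei).z = 0 := rfl
@[simp] lemma inv_x (a : Hei) : a⁻¹.x = -a.x := rfl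
@[simp] lemma inv_y (a : Hei) : a⁻¹.y = -a.y + a.x * a.z := rfl
@[simp] lemma inv_z (a : Hei) : a⁻¹.z = -a.z := rfl

instance : Group Hei where
  mul_assoc a b c := by ext <;> simp <;> ring
  one_mul a := by ext <;> simp
  mul_one a := by ext <;> simp
  inv_mul_cancel a := by ext <;> simp

/-- The generator `u` of `Hei`. -/
def u : Hei := ⟨1, 0, 0⟩
/-- The generator `v` of `Hei`. -/
def v : Hei := ⟨0, 0, 1⟩
/-- The central generator `z` of `Hei`. -/
def zz : Hei := ⟨0, 1, 0⟩

end Hei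

open SemidirectProduct

set_option linter.unreachableTactic false in
set_option linter.unusedTactic false in
/-- The order-four automorphism of `Hei` sending `u ↦ v`, `v ↦ u⁻¹`, `z ↦ z`; in coordinates
`(x,y,z) ↦ (-z, y - xz, x)`. -/
def τ : MulAut Hei where
  toFun p := ⟨-p.z, p.y - p.x * p.z, p.x⟩
  invFun p := ⟨p.z, p.y - p.z * p.x, -p.x⟩
  left_inv p := by ext <;> simp <;> ring
  right_inv p := by ext <;> simp <;> ring
  map_mul' a b := by ext <;> simp <;> ring

set_option linter.unreachableTactic false in
set_option linter.unusedTactic false in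
lemma τ_pow_four : τ ^ 4 = 1 := by
  refine MulEquiv.ext fun p => ?_
  show τ (τ (τ (τ p))) = p
  ext <;> simp [τ] <;> ring

lemma τ_pow_mod (n : ℕ) : τ ^ (n % 4) = τ ^ n := by
  conv_rhs => rw [← Nat.div_add_mod n 4]
  rw [pow_add, pow_mul, τ_pow_four, one_pow, one_mul]

/-- The action of `ℤ/4` on `Hei` by powers of `τ`. -/
def φG : Multiplicative (ZMod 4) →* MulAut Hei where
  toFun s := τ ^ (Multiplicative.toAdd s).val
  map_one' := by
    show τ ^ (0 : ZMod 4).val = 1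
    simp
  map_mul' a b := by
    show τ ^ ((Multiplicative.toAdd a + Multiplicative.toAdd b : ZMod 4)).val = _
    rw [ZMod.val_add, τ_pow_mod, pow_add]

/-- `G = Hei ⋊ ℤ/4`. -/
abbrev G := Hei ⋊[φG] Multiplicative (ZMod 4)

/-- The generator `t` of the `ℤ/4`-factor of `G`. -/
def tG : G := inr (Multiplicative.ofAdd (1 : ZMod 4))
/-- The element `u` of `G`. -/
def uG : G := inl Hei.u
/-- The element `v` of `G`. -/
def vG : G := inl Hei.v
/-- The central element `z` of `G`. -/
def zG : G := inl Hei.zz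

open Pointwise

/-!
Since `Hei` is torsion-free, the projection `G → ℤ/4` is injective on every finite subgroup `H`,
so `H` is generated by any of its elements lying over `t` or `t²`. A torsion element `(p, t)`
satisfies `(p, t)⁴ = 1`, which forces `p = q · τ(q⁻¹)`, i.e. `(p, t)` is conjugate to `t` by `q`.
A torsion element `(p, t²)` with `p = (x, y, z)` satisfies `2y = xz`, and the parities of `x` and
`z` decide whether it is conjugate to `t²`, to `ut²`, or to `vt² = t(ut²)t⁻¹`. The three classes
are told apart by their orders and by the character `G → ℤ/2`, `(p, s) ↦ x + z mod 2`, which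
kills `t` but not `u`.
-/

open SemidirectProduct Multiplicative

namespace Hei

lemma pow_x (p : Hei) (n : ℕ) : (p ^ n).x = n * p.x := by
  induction n with
  | zero => simp
  | succ n ih => rw [pow_succ, mul_x, ih]; push_cast; ring

lemma pow_z (p : Hei) (n : ℕ) : (p ^ n).z = n * p.z := by
  induction n with
  | zero => simp
  | succ n ih => rw [pow_succ, mul_z, ih]; push_cast; ring

lemma pow_y_of_x_eq_zero {p : Hei} (hx : p.x = 0) (n : ℕ) : (p ^ n).y = n * p.y := by
  induction n with
  | zero => simp
  | succ n ih => rw [pow_succ, mul_y, ih, pow_x, hx]; push_cast; ring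

lemma eq_one_of_isOfFinOrder {p : Hei} (hp : IsOfFinOrder p) : p = 1 := by
  obtain ⟨n, hn, hpn⟩ := isOfFinOrder_iff_pow_eq_one.mp hp
  have hx : p.x = 0 := by simpa [pow_x, hn.ne'] using congrArg Hei.x hpn
  have hz : p.z = 0 := by simpa [pow_z, hn.ne'] using congrArg Hei.z hpn
  have hy : p.y = 0 := by simpa [pow_y_of_x_eq_zero hx, hn.ne'] using congrArg Hei.y hpn
  exact Hei.ext hx hy hz

end Hei

namespace SemidirectProduct

variable {N K : Type*} [Group N] [Group K] {φ : K →* MulAut N}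

lemma eq_one_of_isOfFinOrder_of_right_eq_one (hN : ∀ n : N, IsOfFinOrder n → n = 1)
    {g : N ⋊[φ] K} (hg : IsOfFinOrder g) (hr : g.right = 1) : g = 1 := by
  have hg_inl : g = inl g.left := by ext <;> simp [hr]
  rw [hg_inl] at hg ⊢
  rw [hN _ ((inl_injective (φ := φ)).isOfFinOrder_iff.mp hg), map_one]

lemma inl_mul_mul_inl_inv (q : N) (g : N ⋊[φ] K) :
    inl q * g * (inl q)⁻¹ = ⟨q * g.left * φ g.right q⁻¹, g.right⟩ := by
  ext <;> simp [mul_left, mul_right, inv_left, inv_right, mul_assoc]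

end SemidirectProduct

lemma Subgroup.eq_zpowers_of_forall_map_mem {G K : Type*} [Group G] [Group K] (f : G →* K)
    {H : Subgroup G} (hker : ∀ w ∈ H, f w = 1 → w = 1) {h : G} (hh : h ∈ H)
    (hf : ∀ w ∈ H, f w ∈ Subgroup.zpowers (f h)) : H = Subgroup.zpowers h := by
  refine le_antisymm (fun w hw => ?_) (Subgroup.zpowers_le.mpr hh)
  obtain ⟨n, hn⟩ := hf w hw
  have hw_eq : w * (h ^ n)⁻¹ = 1 :=
    hker _ (mul_mem hw (inv_mem (zpow_mem hh n))) (by simp [← hn])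
  rw [mul_inv_eq_one.mp hw_eq]
  exact zpow_mem (Subgroup.mem_zpowers h) n

lemma MulAut.conj_smul_zpowers {G : Type*} [Group G] (g x : G) :
    MulAut.conj g • Subgroup.zpowers x = Subgroup.zpowers (g * x * g⁻¹) := by
  rw [Subgroup.pointwise_smul_def]
  exact MonoidHom.map_zpowers _ _

lemma orderOf_eq_of_conj_smul_zpowers_eq {G : Type*} [Group G] {g x y : G}
    (h : MulAut.conj g • Subgroup.zpowers x = Subgroup.zpowers y) : orderOf x = orderOf y := by
  rw [← Nat.card_zpowers, ← Nat.card_zpowers, ← h]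
  exact Nat.card_congr (Subgroup.equivSMul _ _).toEquiv

@[simp] lemma φG_ofAdd_one_apply (p : Hei) : φG (ofAdd 1) p = ⟨-p.z, p.y - p.x * p.z, p.x⟩ := rfl

@[simp] lemma φG_ofAdd_two_apply (p : Hei) : φG (ofAdd 2) p = ⟨-p.x, p.y, -p.z⟩ := by
  show τ (τ p) = _
  exact Hei.ext rfl (by simp [τ]; ring) rfl

lemma tG_pow (n : ℕ) : tG ^ n = inr (ofAdd 1 ^ n) := by
  rw [tG, map_pow]

lemma tG_sq : tG ^ 2 = ⟨1, ofAdd 2⟩ := tG_pow 2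

lemma uG_mul_tG_sq : uG * tG ^ 2 = ⟨Hei.u, ofAdd 2⟩ := by
  rw [tG_sq]; ext <;> simp [uG, mul_left, mul_right]

lemma mk_ofAdd_one_sq (p : Hei) :
    (⟨p, ofAdd 1⟩ : G) ^ 2 =
      ⟨⟨p.x - p.z, 2 * p.y - p.x * p.z + p.x * p.x, p.x + p.z⟩, ofAdd 2⟩ := by
  refine SemidirectProduct.ext ?_ rfl
  ext <;> simp [pow_two, mul_left] <;> ring

lemma mk_ofAdd_two_sq (w : Hei) :
    (⟨w, ofAdd 2⟩ : G) ^ 2 = inl ⟨0, 2 * w.y - w.x * w.z, 0⟩ := by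
  refine SemidirectProduct.ext ?_ (by simp [pow_two, mul_right]; decide)
  ext <;> simp [pow_two, mul_left]
  ring

lemma G.eq_one_of_isOfFinOrder_of_right_eq_one {g : G} (hg : IsOfFinOrder g)
    (hr : g.right = 1) : g = 1 :=
  SemidirectProduct.eq_one_of_isOfFinOrder_of_right_eq_one
    (fun _ => Hei.eq_one_of_isOfFinOrder) hg hr

lemma two_mul_y_of_isOfFinOrder {w : Hei} (h : IsOfFinOrder (⟨w, ofAdd 2⟩ : G)) :
    2 * w.y = w.x * w.z := by
  have hsq := G.eq_one_of_isOfFinOrder_of_right_eq_one h.pow (by rw [mk_ofAdd_two_sq]; rfl)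
  rw [mk_ofAdd_two_sq] at hsq
  have hy := congrArg (fun g : G => g.left.y) hsq
  simp only [left_inl, one_left, Hei.one_y] at hy
  linarith

lemma exists_conj_tG_eq_of_isOfFinOrder {p : Hei} (h : IsOfFinOrder (⟨p, ofAdd 1⟩ : G)) :
    ∃ g : G, g * tG * g⁻¹ = ⟨p, ofAdd 1⟩ := by
  have hsq := two_mul_y_of_isOfFinOrder (mk_ofAdd_one_sq p ▸ h.pow (n := 2))
  have hy : 4 * p.y = -(p.x - p.z) ^ 2 := by linear_combination hsq
  obtain ⟨a, ha⟩ : Even (p.x - p.z) := by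
    rw [← Int.even_pow' two_ne_zero]
    exact ⟨-(2 * p.y), by linarith⟩
  have hya : p.y = -(a * a) := mul_left_cancel₀ four_ne_zero (by rw [hy, ha]; ring)
  refine ⟨inl ⟨a, 0, p.z + a⟩, ?_⟩
  rw [tG, inl_mul_mul_inl_inv]
  ext <;> simp [hya] <;> linarith

lemma conj_tG_uG_mul_tG_sq : tG * (uG * tG ^ 2) * tG⁻¹ = ⟨Hei.v, ofAdd 2⟩ := by
  rw [uG_mul_tG_sq]
  ext <;> simp [tG, Hei.u, Hei.v, mul_left, mul_right, inv_left, inv_right]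

lemma exists_conj_eq_of_isOfFinOrder_of_right_eq_two {p : Hei}
    (h : IsOfFinOrder (⟨p, ofAdd 2⟩ : G)) :
    ∃ g : G, g * tG ^ 2 * g⁻¹ = ⟨p, ofAdd 2⟩ ∨ g * (uG * tG ^ 2) * g⁻¹ = ⟨p, ofAdd 2⟩ := by
  have hy := two_mul_y_of_isOfFinOrder h
  obtain ⟨a, ha | ha⟩ := Int.even_or_odd' p.x <;> obtain ⟨c, hc | hc⟩ := Int.even_or_odd' p.z
  · have hyac : p.y = 2 * a * c := mul_left_cancel₀ two_ne_zero (by rw [hy, ha, hc]; ring)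
    refine ⟨inl ⟨a, 0, c⟩, Or.inl ?_⟩
    rw [tG_sq, inl_mul_mul_inl_inv]
    ext <;> simp [ha, hc, hyac] <;> ring
  · have hyac : p.y = a * (2 * c + 1) := mul_left_cancel₀ two_ne_zero (by rw [hy, ha, hc]; ring)
    refine ⟨inl ⟨a, 0, c⟩ * tG, Or.inr ?_⟩
    rw [show inl ⟨a, 0, c⟩ * tG * (uG * tG ^ 2) * (inl ⟨a, 0, c⟩ * tG)⁻¹ =
      inl ⟨a, 0, c⟩ * (tG * (uG * tG ^ 2) * tG⁻¹) * (inl ⟨a, 0, c⟩)⁻¹ by group,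
      conj_tG_uG_mul_tG_sq, inl_mul_mul_inl_inv]
    ext <;> simp [Hei.v, ha, hc, hyac] <;> ring
  · have hyac : p.y = (2 * a + 1) * c := mul_left_cancel₀ two_ne_zero (by rw [hy, ha, hc]; ring)
    refine ⟨inl ⟨a, 0, c⟩, Or.inr ?_⟩
    rw [uG_mul_tG_sq, inl_mul_mul_inl_inv]
    ext <;> simp [Hei.u, ha, hc, hyac] <;> ring
  · have hodd : Odd (2 * p.y) := by
      rw [hy, ha, hc]
      exact (odd_two_mul_add_one a).mul (odd_two_mul_add_one c)
    exact absurd hodd (Int.not_odd_iff_even.mpr (even_two_mul p.y))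

namespace Hei

def parity : Hei →* Multiplicative (ZMod 2) where
  toFun p := ofAdd ((p.x + p.z : ℤ) : ZMod 2)
  map_one' := by simp
  map_mul' a b := by
    rw [← ofAdd_add, mul_x, mul_z]
    push_cast
    ring_nf

lemma parity_τ (p : Hei) : parity (τ p) = parity p := by
  change ofAdd ((-p.z + p.x : ℤ) : ZMod 2) = ofAdd ((p.x + p.z : ℤ) : ZMod 2)
  push_cast
  rw [ZMod.neg_eq_self_mod_two, add_comm]

lemma parity_φG (s : Multiplicative (ZMod 4)) (p : Hei) : parity (φG s p) = parity p := by
  change parity ((τ ^ (toAdd s).val) p) = _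
  induction (toAdd s).val generalizing p with
  | zero => rfl
  | succ n ih => rw [pow_succ', MulAut.mul_apply, parity_τ, ih]

end Hei

def parityG : G →* Multiplicative (ZMod 2) :=
  SemidirectProduct.lift Hei.parity 1 fun s => by ext p; simp [Hei.parity_φG]

lemma tG_mem_ker_parityG : tG ∈ parityG.ker := by
  simp [parityG, tG]

lemma parityG_uG : parityG uG ≠ 1 := by
  simp [parityG, uG, Hei.parity, Hei.u]

lemma conj_smul_zpowers_tG_sq_ne_zpowers_uG_mul_tG_sq (g : G) :
    MulAut.conj g • Subgroup.zpowers (tG ^ 2) ≠ Subgroup.zpowers (uG * tG ^ 2) := by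
  rw [MulAut.conj_smul_zpowers]
  intro h
  have htG_sq : tG ^ 2 ∈ parityG.ker := pow_mem tG_mem_ker_parityG 2
  have hmem : uG * tG ^ 2 ∈ parityG.ker :=
    Subgroup.zpowers_le.mpr (parityG.normal_ker.conj_mem _ htG_sq g) (h ▸ Subgroup.mem_zpowers _)
  exact parityG_uG ((parityG.ker.mul_mem_cancel_right htG_sq).mp hmem)

lemma mem_zpowers_ofAdd_one (s : Multiplicative (ZMod 4)) : s ∈ Subgroup.zpowers (ofAdd 1) :=
  ⟨(toAdd s).val, by revert s; decide⟩

lemma eq_one_or_eq_ofAdd_two {s : Multiplicative (ZMod 4)} (h : s ≠ ofAdd 1) (h' : s⁻¹ ≠ ofAdd 1) :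
    s = 1 ∨ s = ofAdd 2 := by
  revert s; decide

lemma exists_conj_eq_of_finite (H : Subgroup G) (hH : H ≠ ⊥) [Finite H] :
    ∃ g : G,
      H = MulAut.conj g • Subgroup.zpowers tG ∨
      H = MulAut.conj g • Subgroup.zpowers (tG ^ 2) ∨
      H = MulAut.conj g • Subgroup.zpowers (uG * tG ^ 2) := by
  have htors : ∀ w ∈ H, IsOfFinOrder w := fun w hw =>
    Submonoid.isOfFinOrder_coe.mpr (isOfFinOrder_of_finite (⟨w, hw⟩ : H))
  have hker : ∀ w ∈ H, rightHom w = 1 → w = 1 := fun w hw =>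
    G.eq_one_of_isOfFinOrder_of_right_eq_one (htors w hw)
  by_cases h1 : ∃ w ∈ H, w.right = ofAdd 1
  · obtain ⟨⟨p, s⟩, hw, rfl : s = ofAdd 1⟩ := h1
    obtain ⟨g, hg⟩ := exists_conj_tG_eq_of_isOfFinOrder (htors _ hw)
    refine ⟨g, Or.inl ?_⟩
    rw [MulAut.conj_smul_zpowers, hg]
    exact Subgroup.eq_zpowers_of_forall_map_mem rightHom hker hw
      fun w _ => mem_zpowers_ofAdd_one w.right
  push Not at h1
  have hright : ∀ w ∈ H, w.right = 1 ∨ w.right = ofAdd 2 := fun w hw =>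
    eq_one_or_eq_ofAdd_two (h1 w hw) (h1 w⁻¹ (inv_mem hw))
  by_cases h2 : ∃ w ∈ H, w.right = ofAdd 2
  · obtain ⟨⟨p, s⟩, hw, rfl : s = ofAdd 2⟩ := h2
    have hH_eq := Subgroup.eq_zpowers_of_forall_map_mem rightHom hker hw fun w hw' =>
      by rcases hright w hw' with h | h <;> simp [h]
    obtain ⟨g, hg | hg⟩ := exists_conj_eq_of_isOfFinOrder_of_right_eq_two (htors _ hw)
    · exact ⟨g, Or.inr (Or.inl (by rw [MulAut.conj_smul_zpowers, hg, hH_eq]))⟩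
    · exact ⟨g, Or.inr (Or.inr (by rw [MulAut.conj_smul_zpowers, hg, hH_eq]))⟩
  push Not at h2
  refine absurd ((Subgroup.eq_bot_iff_forall H).mpr fun w hw => hker w hw ?_) hH
  exact (hright w hw).resolve_right (h2 w hw)

lemma orderOf_tG : orderOf tG = 4 := by
  refine orderOf_eq_prime_pow (p := 2) (n := 1) ?_ ?_ <;>
    rw [tG_pow, ← map_one inr, inr_inj] <;> decide

lemma orderOf_tG_sq : orderOf (tG ^ 2) = 2 := by
  rw [orderOf_pow_of_dvd two_ne_zero (by rw [orderOf_tG]; norm_num), orderOf_tG]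

lemma orderOf_uG_mul_tG_sq : orderOf (uG * tG ^ 2) = 2 := by
  rw [uG_mul_tG_sq]
  refine orderOf_eq_prime ?_ fun h => ?_
  · rw [mk_ofAdd_two_sq]; rfl
  · exact absurd (congrArg SemidirectProduct.right h) (by decide)

/-- Up to conjugacy, the nontrivial finite subgroups of `G = Hei ⋊ ℤ/4` are exactly
`⟨t⟩ ≅ ℤ/4`, `⟨t²⟩ ≅ ℤ/2` and `⟨ut²⟩ ≅ ℤ/2`. -/
theorem stmt_11 :
    (∀ H : Subgroup G, H ≠ ⊥ → Finite H →
      ∃ g : G,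
        H = MulAut.conj g • Subgroup.zpowers tG ∨
        H = MulAut.conj g • Subgroup.zpowers (tG ^ 2) ∨
        H = MulAut.conj g • Subgroup.zpowers (uG * tG ^ 2)) ∧
    orderOf tG = 4 ∧ orderOf (tG ^ 2) = 2 ∧ orderOf (uG * tG ^ 2) = 2 ∧
    (∀ g : G, MulAut.conj g • Subgroup.zpowers tG ≠ Subgroup.zpowers (tG ^ 2)) ∧
    (∀ g : G, MulAut.conj g • Subgroup.zpowers tG ≠ Subgroup.zpowers (uG * tG ^ 2)) ∧
    (∀ g : G, MulAut.conj g • Subgroup.zpowers (tG ^ 2) ≠ Subgroup.zpowers (uG * tG ^ 2)) := by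
  refine ⟨fun H hH _ => exists_conj_eq_of_finite H hH, orderOf_tG, orderOf_tG_sq,
    orderOf_uG_mul_tG_sq, fun g h => ?_, fun g h => ?_,
    conj_smul_zpowers_tG_sq_ne_zpowers_uG_mul_tG_sq⟩
  · have := orderOf_eq_of_conj_smul_zpowers_eq h
    rw [orderOf_tG, orderOf_tG_sq] at this
    exact absurd this (by norm_num)
  · have := orderOf_eq_of_conj_smul_zpowers_eq h
    rw [orderOf_tG, orderOf_uG_mul_tG_sq] at this
    exact absurd this (by norm_num)
end

section
/- In Q = ℤ² ⋊ ℤ/4, let V ⊆ Q be a subgroup isomorphic to D∞ with V maximal among virtually cyclic subgroups (V = V_max). Then the normalizer of V in Q equals V: N_Q(V) = V. -/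
open SemidirectProduct

/-- The automorphism of `ℤ²` given by multiplication by `i`: `(a,b) ↦ (-b,a)`. -/
def J : (ℤ × ℤ) ≃+ (ℤ × ℤ) where
  toFun p := (-p.2, p.1)
  invFun p := (p.2, -p.1)
  left_inv p := by simp
  right_inv p := by simp
  map_add' p q := by simp [Prod.ext_iff]; ring

abbrev Z2 := Multiplicative (ℤ × ℤ)

def Jm : MulAut Z2 := AddEquiv.toMultiplicative J

lemma Jm_pow_four : Jm ^ 4 = 1 := by
  refine MulEquiv.ext fun x => ?_
  show Jm (Jm (Jm (Jm x))) = x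
  simp [Jm, J, AddEquiv.toMultiplicative, Prod.ext_iff]

lemma Jm_pow_mod (n : ℕ) : Jm ^ (n % 4) = Jm ^ n := by
  conv_rhs => rw [← Nat.div_add_mod n 4]
  rw [pow_add, pow_mul, Jm_pow_four, one_pow, one_mul]

/-- The action of `ℤ/4` on `ℤ²` by powers of multiplication by `i`. -/
def phiQ : Multiplicative (ZMod 4) →* MulAut Z2 where
  toFun s := Jm ^ (Multiplicative.toAdd s).val
  map_one' := by
    show Jm ^ (0 : ZMod 4).val = 1
    simp
  map_mul' a b := by
    show Jm ^ ((Multiplicative.toAdd a + Multiplicative.toAdd b : ZMod 4)).val = _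
    rw [ZMod.val_add, Jm_pow_mod, pow_add]

/-- `Q = ℤ² ⋊ ℤ/4`. -/
abbrev Q := Z2 ⋊[phiQ] Multiplicative (ZMod 4)

/-- The generator `t` of the `ℤ/4`-factor of `Q`. -/
def tQ : Q := inr (Multiplicative.ofAdd (1 : ZMod 4))

/-- The inclusion `ℤ² → Q`. -/
def ιQ (x : ℤ × ℤ) : Q := inl (Multiplicative.ofAdd x)

/-!
Let `u` and `g` be the images in `V` of the rotation `r 1` and the reflection `sr 0` of `D∞`.
An element of `Q` of order 2 must have `ℤ/4`-component `2`, since `ℤ²` is torsion-free; so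
`u = (image of sr 0) * (image of sr 1)` is a translation `ιQ x` with `x ≠ 0`, and the translations
in `V`, which commute with `u`, are exactly the powers of `u`. An element `h` of the normalizer
conjugates `u` into such a power, i.e. rotates `x` to a multiple of `x`; a quarter turn has no
nonzero eigenvector in `ℤ²`, so `h` has `ℤ/4`-component `0` or `2`. After multiplying by `g` we may
assume `h = ιQ y`; since `g` acts by `-1`, the commutator `[h, g] = ιQ (2 • y)` lies in `V`, and
maximality gives `ιQ y ∈ V`.
-/

open DihedralGroup

theorem DihedralGroup.exists_eq_r_of_commute_r_one {n : ℕ} (hn : (2 : ZMod n) ≠ 0)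
    {d : DihedralGroup n} (h : Commute d (r 1)) : ∃ i, d = r i := by
  rcases d with i | i
  · exact ⟨i, rfl⟩
  · have h' : sr (i + 1) = sr (i - 1) := by rw [← sr_mul_r, ← r_mul_sr]; exact h
    exact absurd (by linear_combination sr.inj h') hn

theorem SemidirectProduct.mul_inl_mul_inv {N G : Type*} [CommGroup N] [Group G]
    {φ : G →* MulAut N} (h : N ⋊[φ] G) (n : N) : h * inl n * h⁻¹ = inl (φ h.right n) := by
  ext
  · simp only [mul_left, inv_left, left_inl, right_inl, mul_right, mul_one, ← MulAut.mul_apply,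
      ← map_mul, mul_inv_cancel, map_one, MulAut.one_apply]
    exact mul_inv_cancel_comm _ _
  · simp

lemma ιQ_add (x y : ℤ × ℤ) : ιQ (x + y) = ιQ x * ιQ y := by simp [ιQ]

lemma ιQ_zsmul (n : ℤ) (x : ℤ × ℤ) : ιQ (n • x) = ιQ x ^ n := by
  simp only [ιQ, ofAdd_zsmul, map_zpow]

lemma ιQ_zero : ιQ 0 = 1 := rfl

lemma ιQ_neg (x : ℤ × ℤ) : ιQ (-x) = (ιQ x)⁻¹ := by simp [ιQ]

lemma ιQ_injective : Function.Injective ιQ := inl_injective.comp Multiplicative.ofAdd.injective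

lemma eq_ιQ_of_right_eq_one {q : Q} (hq : q.right = 1) : q = ιQ (Multiplicative.toAdd q.left) := by
  ext <;> simp [ιQ, hq]

lemma phiQ_ofAdd_two_apply (z : Z2) : phiQ (.ofAdd 2) z = z⁻¹ := rfl

lemma conj_ιQ_of_right_eq_ofAdd_two {g : Q} (hg : g.right = .ofAdd 2) (x : ℤ × ℤ) :
    g * ιQ x * g⁻¹ = ιQ (-x) := by
  rw [ιQ, mul_inl_mul_inv, hg, phiQ_ofAdd_two_apply]
  rfl

lemma J_ne_zsmul {x : ℤ × ℤ} (hx : x ≠ 0) (i : ℤ) : J x ≠ i • x := by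
  intro h
  obtain ⟨h1, h2⟩ := Prod.ext_iff.mp h
  simp only [J, AddEquiv.coe_mk, Equiv.coe_fn_mk, Prod.smul_fst, Prod.smul_snd, smul_eq_mul] at h1 h2
  have hx1 : x.1 * (1 + i ^ 2) = 0 := by linear_combination h2 - i * h1
  replace hx1 : x.1 = 0 := (mul_eq_zero.mp hx1).resolve_right (by positivity)
  have hx2 : x.2 = 0 := by linear_combination -h1 - i * hx1
  exact hx (Prod.ext hx1 hx2)

lemma mul_self_eq_one_iff_zmod_four (s : Multiplicative (ZMod 4)) :
    s * s = 1 ↔ s = 1 ∨ s = .ofAdd 2 := by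
  revert s; decide

lemma mul_self_eq_one_of_phiQ_apply_eq_zsmul {s : Multiplicative (ZMod 4)} {x : ℤ × ℤ}
    (hx : x ≠ 0) {i : ℤ} (h : phiQ s (.ofAdd x) = .ofAdd (i • x)) : s * s = 1 := by
  by_contra hs
  have h13 : ∀ s : Multiplicative (ZMod 4), s * s ≠ 1 → s = .ofAdd 1 ∨ s = .ofAdd 3 := by decide
  obtain rfl | rfl := h13 s hs
  · exact J_ne_zsmul hx i (Multiplicative.ofAdd.injective h)
  · refine J_ne_zsmul hx (-i) ?_
    have h' : -J x = i • x := Multiplicative.ofAdd.injective h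
    simp [← h']

lemma right_eq_ofAdd_two_of_mul_self_eq_one {q : Q} (hq : q * q = 1) (hq1 : q ≠ 1) :
    q.right = .ofAdd 2 := by
  have hr : q.right * q.right = 1 := by rw [← mul_right, hq, one_right]
  refine ((mul_self_eq_one_iff_zmod_four _).mp hr).resolve_left fun hr1 => hq1 ?_
  obtain ⟨y, rfl⟩ : ∃ y, q = ιQ y := ⟨_, eq_ιQ_of_right_eq_one hr1⟩
  have hyy : y + y = 0 := ιQ_injective (by rw [ιQ_add, hq, ιQ_zero])
  have hy : y = 0 := by
    obtain ⟨h1, h2⟩ := Prod.ext_iff.mp hyy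
    simp only [Prod.fst_add, Prod.snd_add, Prod.fst_zero, Prod.snd_zero] at h1 h2
    exact Prod.ext (show y.1 = 0 by omega) (show y.2 = 0 by omega)
  rw [hy, ιQ_zero]

lemma mem_of_mem_normalizer_of_right_eq_one {V : Subgroup Q}
    (hmax : ∀ (x : ℤ × ℤ) (n : ℤ), n ≠ 0 → ιQ (n • x) ∈ V → ιQ x ∈ V)
    {g : Q} (hg : g ∈ V) (hg2 : g.right = .ofAdd 2)
    {h : Q} (hh : h ∈ Subgroup.normalizer (V : Set Q)) (hr : h.right = 1) : h ∈ V := by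
  obtain ⟨y, rfl⟩ : ∃ y, h = ιQ y := ⟨_, eq_ιQ_of_right_eq_one hr⟩
  have hcomm : ιQ y * g * (ιQ y)⁻¹ * g⁻¹ = ιQ ((2 : ℤ) • y) :=
    calc ιQ y * g * (ιQ y)⁻¹ * g⁻¹ = ιQ y * (g * ιQ (-y) * g⁻¹) := by rw [ιQ_neg]; group
      _ = ιQ ((2 : ℤ) • y) := by
        rw [conj_ιQ_of_right_eq_ofAdd_two hg2, neg_neg, ← ιQ_add, two_zsmul]
  refine hmax y 2 two_ne_zero (hcomm ▸ V.mul_mem ?_ (V.inv_mem hg))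
  exact (Subgroup.mem_normalizer_iff.mp hh g).mp hg

lemma mem_of_mem_normalizer_of_right_mul_self_eq_one {V : Subgroup Q}
    (hmax : ∀ (x : ℤ × ℤ) (n : ℤ), n ≠ 0 → ιQ (n • x) ∈ V → ιQ x ∈ V)
    {g : Q} (hg : g ∈ V) (hg2 : g.right = .ofAdd 2)
    {h : Q} (hh : h ∈ Subgroup.normalizer (V : Set Q)) (hr : h.right * h.right = 1) : h ∈ V := by
  rcases (mul_self_eq_one_iff_zmod_four _).mp hr with hr1 | hr2
  · exact mem_of_mem_normalizer_of_right_eq_one hmax hg hg2 hh hr1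
  · have hhg : h * g ∈ V := by
      refine mem_of_mem_normalizer_of_right_eq_one hmax hg hg2
        (mul_mem hh (V.le_normalizer hg)) ?_
      rw [mul_right, hr2, hg2]
      rfl
    simpa using V.mul_mem hhg (V.inv_mem hg)

lemma right_mul_self_eq_one_of_mem_normalizer {V : Subgroup Q} {x : ℤ × ℤ} (hx : x ≠ 0)
    (hxV : ιQ x ∈ V) (hV : ∀ y, ιQ y ∈ V → ∃ i : ℤ, y = i • x)
    {h : Q} (hh : h ∈ Subgroup.normalizer (V : Set Q)) : h.right * h.right = 1 := by
  have hconj : h * ιQ x * h⁻¹ = ιQ (Multiplicative.toAdd (phiQ h.right (.ofAdd x))) :=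
    mul_inl_mul_inv _ _
  obtain ⟨i, hi⟩ := hV _ (hconj ▸ (Subgroup.mem_normalizer_iff.mp hh _).mp hxV)
  exact mul_self_eq_one_of_phiQ_apply_eq_zsmul hx (congrArg Multiplicative.ofAdd hi)

lemma exists_zsmul_of_ιQ_mem_range {f : DihedralGroup 0 →* Q} (hf : Function.Injective f)
    {x : ℤ × ℤ} (hx : f (r 1) = ιQ x) {y : ℤ × ℤ} (hy : ιQ y ∈ f.range) :
    ∃ i : ℤ, y = i • x := by
  obtain ⟨d, hd⟩ := hy
  have hcomm : Commute (f d) (f (r 1)) := by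
    rw [hd, hx, Commute, SemiconjBy, ← ιQ_add, ← ιQ_add, add_comm]
  obtain ⟨i, rfl⟩ := exists_eq_r_of_commute_r_one (by decide) (hcomm.of_map hf)
  refine ⟨(show ℤ from i), ιQ_injective ?_⟩
  rw [← hd, ιQ_zsmul, ← hx, ← map_zpow, r_one_zpow]
  rfl

/-- If `V ⊆ Q = ℤ² ⋊ ℤ/4` is an infinite dihedral subgroup which is maximal in the sense
that `V ∩ ℤ²` is a maximal infinite cyclic subgroup of `ℤ²` (i.e. `ℤ²/(V ∩ ℤ²)` is
torsion-free, expressed by saying that `n•x ∈ V` for some `n ≠ 0` implies `x ∈ V`), then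
`V` is self-normalizing: `N_Q(V) = V`. -/
theorem stmt_18 :
    ∀ V : Subgroup Q, Nonempty (V ≃* DihedralGroup 0) →
      (∀ (x : ℤ × ℤ) (n : ℤ), n ≠ 0 → ιQ (n • x) ∈ V → ιQ x ∈ V) →
      Subgroup.normalizer (V : Set Q) = V := by
  rintro V ⟨e⟩ hmax
  set f : DihedralGroup 0 →* Q := V.subtype.comp e.symm.toMonoidHom
  have hf : Function.Injective f := V.subtype_injective.comp e.symm.injective
  have hfV : f.range = V := by simp [f, MonoidHom.range_comp, ← MonoidHom.range_eq_map]
  have hrefl (i : ZMod 0) : (f (sr i)).right = .ofAdd 2 :=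
    right_eq_ofAdd_two_of_mul_self_eq_one (by rw [← map_mul, sr_mul_self, map_one])
      ((hf.ne_iff' f.map_one).mpr nofun)
  obtain ⟨x, hx⟩ : ∃ x, f (r 1) = ιQ x := by
    refine ⟨_, eq_ιQ_of_right_eq_one ?_⟩
    rw [← sub_zero (1 : ZMod 0), ← sr_mul_sr, map_mul, mul_right, hrefl, hrefl]
    rfl
  have hx0 : x ≠ 0 := by
    rintro rfl
    exact ((hf.ne_iff' f.map_one).mpr nofun : f (r 1) ≠ 1) hx
  refine le_antisymm (fun h hh => ?_) V.le_normalizer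
  refine mem_of_mem_normalizer_of_right_mul_self_eq_one hmax (hfV ▸ ⟨sr 0, rfl⟩)
    (hrefl 0) hh (right_mul_self_eq_one_of_mem_normalizer hx0 (hfV ▸ ⟨r 1, hx⟩)
      (fun y hy => exists_zsmul_of_ιQ_mem_range hf hx (hfV ▸ hy)) hh)
end
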